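/- Suppose there is a family {C_ξ : ξ < ω₂} of clubs of ω₁ such that every club of ω₁ contains some C_ξ (i.e., the club filter on ω₁ has density ℵ₂). Then CG(S²₁)⁻ holds: there is a sequence ⟨𝒞_α : α ∈ S²₁⟩ where each 𝒞_α is a family of at most ℵ₂ clubs of α, such that for every club C ⊆ ω₂ there exist α ∈ S²₁ and D ∈ 𝒞_α with D ⊆ C. -/

import Mathlib

open Cardinal Set

def IsClubSet (C : Set Ordinal) (δ : Ordinal) : Prop :=
  (∀ x ∈ C, x < δ) ∧ (∀ x < δ, ∃ y ∈ C, x ≤ y) ∧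
  (∀ x, x < δ → x ≠ 0 → (∀ y < x, ∃ z ∈ C, y < z ∧ z < x) → x ∈ C)

def S21 (δ : Ordinal) : Prop := δ < (aleph 2).ord ∧ Ordinal.cof δ = aleph 1

/-!
For `α ∈ S²₁` fix a strictly increasing map `e_α : ω₁ → α`, cofinal in `α` and continuous at
limits (built from a fundamental sequence of `α`), and let `𝒞_α` consist of the closures in `α`
of the images `e_α[C_ξ]`, `ξ < ω₂`. Given a club `E` of `ω₂`, let `α` be the supremum of the first
`ω₁` elements of `E`. Then `α ∈ S²₁` and `E ∩ α` is a club of `α`, so by continuity of `e_α` its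
preimage under `e_α` is a club of `ω₁`. It contains some `C_ξ`, and then `E`, being closed,
contains the closure of `e_α[C_ξ]`.
-/

open Order

universe u v

section ClosedBelow

def IsClosedBelow (E : Set Ordinal) (δ : Ordinal) : Prop :=
  ∀ x, x < δ → x ≠ 0 → (∀ y < x, ∃ z ∈ E, y < z ∧ z < x) → x ∈ E

theorem IsClubSet.isClosedBelow {E : Set Ordinal} {δ : Ordinal} (h : IsClubSet E δ) :
    IsClosedBelow E δ :=
  h.2.2

def closureBelow (α : Ordinal) (D : Set Ordinal) : Set Ordinal :=
  D ∪ {x | x < α ∧ x ≠ 0 ∧ ∀ y < x, ∃ z ∈ D, y < z ∧ z < x}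

variable {α δ : Ordinal} {D E : Set Ordinal}

theorem isClubSet_closureBelow (hD : ∀ x ∈ D, x < α) (hcof : ∀ x < α, ∃ y ∈ D, x ≤ y) :
    IsClubSet (closureBelow α D) α := by
  refine ⟨?_, fun x hx => (hcof x hx).imp fun y hy => ⟨Or.inl hy.1, hy.2⟩, ?_⟩
  · rintro x (hx | ⟨hx, -⟩)
    exacts [hD x hx, hx]
  · refine fun x hx hx0 hlim => Or.inr ⟨hx, hx0, fun y hy => ?_⟩
    obtain ⟨z, hz | ⟨-, -, hz⟩, hyz, hzx⟩ := hlim y hy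
    · exact ⟨z, hz, hyz, hzx⟩
    · obtain ⟨w, hw, hyw, hwz⟩ := hz y hyz
      exact ⟨w, hw, hyw, hwz.trans hzx⟩

theorem IsClosedBelow.closureBelow_subset (hE : IsClosedBelow E δ) (hα : α ≤ δ) (hDE : D ⊆ E) :
    closureBelow α D ⊆ E := by
  rintro x (hx | ⟨hx, hx0, hlim⟩)
  · exact hDE hx
  · refine hE x (hx.trans_le hα) hx0 fun y hy => ?_
    obtain ⟨z, hz, hyz⟩ := hlim y hy
    exact ⟨z, hDE hz, hyz⟩

theorem IsClosedBelow.isClubSet_inter_Iio (hE : IsClosedBelow E δ) (hα : α ≤ δ)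
    (hcof : ∀ x < α, ∃ y ∈ E, x ≤ y ∧ y < α) : IsClubSet (E ∩ Iio α) α := by
  refine ⟨fun x hx => hx.2, fun x hx => ?_, fun x hx hx0 hlim => ⟨?_, hx⟩⟩
  · obtain ⟨y, hyE, hxy, hyα⟩ := hcof x hx
    exact ⟨y, ⟨hyE, hyα⟩, hxy⟩
  · refine hE x (hx.trans_le hα) hx0 fun y hy => ?_
    obtain ⟨z, ⟨hzE, -⟩, hz⟩ := hlim y hy
    exact ⟨z, hzE, hz⟩

theorem isSuccLimit_of_forall_exists_between {x : Ordinal} (hx0 : x ≠ 0)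
    (hlim : ∀ y < x, ∃ z ∈ D, y < z ∧ z < x) : IsSuccLimit x := by
  refine Ordinal.isSuccLimit_iff.2 ⟨hx0, isSuccPrelimit_of_succ_lt fun y hy => ?_⟩
  obtain ⟨z, -, hyz, hzx⟩ := hlim y hy
  exact (succ_le_of_lt hyz).trans_lt hzx

end ClosedBelow

section Lift

theorem isClubSet_image_lift_iff {D : Set Ordinal.{u}} {δ : Ordinal.{u}} :
    IsClubSet (Ordinal.lift.{v} '' D) (Ordinal.lift.{v} δ) ↔ IsClubSet D δ := by
  have lift_eq_zero (x : Ordinal.{u}) : Ordinal.lift.{v} x = 0 ↔ x = 0 := by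
    simpa using Ordinal.lift_inj.{v} (a := x) (b := 0)
  simp [IsClubSet, Ordinal.lt_lift_iff, lift_eq_zero]

theorem IsClubSet.preimage_lift {D : Set Ordinal.{max u v}} {δ : Ordinal.{u}}
    (h : IsClubSet D (Ordinal.lift.{v} δ)) : IsClubSet (Ordinal.lift.{v} ⁻¹' D) δ := by
  rw [← isClubSet_image_lift_iff.{u, v}, image_preimage_eq_of_subset]
  · exact h
  · exact fun x hx => Ordinal.mem_range_lift_of_le (h.1 x hx).le

/-- The clubs `C ξ` of the theorem and the ordinals `α` live in unrelated universes; this moves a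
set of ordinals across, keeping the elements that exist in both. -/
def liftSet (D : Set Ordinal.{u}) : Set Ordinal.{v} :=
  Ordinal.lift.{u} ⁻¹' (Ordinal.lift.{v} '' D)

theorem IsClubSet.liftSet {D : Set Ordinal.{u}} {δ : Ordinal.{u}} {δ' : Ordinal.{v}}
    (h : IsClubSet D δ) (hδ : Ordinal.lift.{v} δ = Ordinal.lift.{u} δ') :
    IsClubSet (liftSet.{u, v} D) δ' :=
  IsClubSet.preimage_lift (hδ ▸ isClubSet_image_lift_iff.2 h)

theorem liftSet_liftSet_subset (B : Set Ordinal.{v}) : liftSet.{u, v} (liftSet.{v, u} B) ⊆ B := by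
  rintro β ⟨_, ⟨γ, hγ, hγβ⟩, hβ⟩
  rwa [Ordinal.lift_inj.mp (hγβ.trans hβ)] at hγ

end Lift

theorem not_bddAbove_union_Ici (E : Set Ordinal) (δ : Ordinal) : ¬BddAbove (E ∪ Ici δ) :=
  fun h => not_bddAbove_Ici δ (h.mono subset_union_right)

section Regular

variable {κ : Cardinal} {E : Set Ordinal}

theorem iSup_Iio_lt_ord (hκ : κ.IsRegular) {β : Ordinal} (hβ : β < κ.ord) {g : Iio β → Ordinal}
    (hg : ∀ γ, g γ < κ.ord) : ⨆ γ, g γ < κ.ord := by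
  refine Ordinal.lift_iSup_lt_of_lt_cof ?_ hg
  rw [Cardinal.mk_Iio_ordinal, Cardinal.lift_lift, ← Ordinal.lift_cof, hκ.cof_ord,
    Cardinal.lift_lt]
  exact Cardinal.lt_ord.1 hβ

/-- `enumOrd` needs an unbounded set; padding `E` with `[κ, ∞)` does not change the first `κ`
elements of its enumeration. -/
theorem IsClubSet.enumOrd_union_Ici_mem (hκ : κ.IsRegular) (hE : IsClubSet E κ.ord) {β : Ordinal}
    (hβ : β < κ.ord) : Ordinal.enumOrd (E ∪ Ici κ.ord) β ∈ E := by
  set f := Ordinal.enumOrd (E ∪ Ici κ.ord)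
  induction β using WellFoundedLT.induction with
  | _ β IH =>
  have hsup : ⨆ γ : Iio β, f γ + 1 < κ.ord := iSup_Iio_lt_ord hκ hβ fun γ =>
    (isSuccLimit_ord hκ.aleph0_le).add_one_lt (hE.1 _ (IH γ γ.2 (γ.2.trans hβ)))
  obtain ⟨y, hyE, hy⟩ := hE.2.1 _ hsup
  have hfy : f β ≤ y := Ordinal.enumOrd_le_of_forall_lt (Or.inl hyE) fun γ hγ =>
    (Ordinal.lt_iSup_add_one (fun γ : Iio β => f γ) ⟨γ, hγ⟩).trans_le hy
  obtain hmem | hge := Ordinal.enumOrd_mem (not_bddAbove_union_Ici E κ.ord) β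
  · exact hmem
  · exact absurd (hge.trans hfy) (hE.1 y hyE).not_ge

theorem IsClubSet.exists_isClubSet_inter_Iio {o : Ordinal} (hκ : κ.IsRegular)
    (hE : IsClubSet E κ.ord) (ho : IsSuccLimit o) (hoκ : o < κ.ord) :
    ∃ α < κ.ord, α.cof = o.cof ∧ IsClubSet (E ∩ Iio α) α := by
  set f := Ordinal.enumOrd (E ∪ Ici κ.ord)
  have hf : StrictMono f := Ordinal.enumOrd_strictMono (not_bddAbove_union_Ici E κ.ord)
  have hfE {β : Ordinal} (hβ : β < o) : f β ∈ E := hE.enumOrd_union_Ici_mem hκ (hβ.trans hoκ)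
  have hα : ⨆ β : Iio o, f β < κ.ord := iSup_Iio_lt_ord hκ hoκ fun β => hE.1 _ (hfE β.2)
  refine ⟨_, hα, Ordinal.cof_iSup_Iio (hf.comp (Subtype.strictMono_coe _)) ho.isSuccPrelimit,
    hE.isClosedBelow.isClubSet_inter_Iio hα.le fun x hx => ?_⟩
  obtain ⟨β, hxβ⟩ := Ordinal.lt_iSup_iff.1 hx
  refine ⟨f β, hfE β.2, hxβ.le, (hf (Order.lt_add_one_iff.2 le_rfl)).trans_le ?_⟩
  exact Ordinal.le_iSup (fun β : Iio o => f β) ⟨β + 1, ho.add_one_lt β.2⟩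

end Regular

section ContinuousCofinal

structure IsContinuousCofinal (e : Ordinal → Ordinal) (o α : Ordinal) : Prop where
  strictMonoOn : StrictMonoOn e (Iio o)
  apply_lt : ∀ β < o, e β < α
  exists_lt : ∀ x < α, ∃ β < o, x < e β
  exists_lt_of_isSuccLimit : ∀ β < o, IsSuccLimit β → ∀ y < e β, ∃ γ < β, y < e γ

/-- `β ↦ sup_{γ < β} (f γ + 1)` for a fundamental sequence `f` of `α`. -/
noncomputable def cofinalMap (α β : Ordinal) : Ordinal :=
  ⨆ γ : {γ : Iio α.cof.ord // γ.1 < β},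
    ((Ordinal.exists_isFundamentalSeq rfl).choose γ.1 : Ordinal) + 1

theorem isContinuousCofinal_cofinalMap {α : Ordinal} {κ : Cardinal} (hκ : ℵ₀ ≤ κ)
    (hα : α.cof = κ) : IsContinuousCofinal (cofinalMap α) κ.ord α := by
  subst hα
  obtain ⟨-, hmono, hcof⟩ := (Ordinal.exists_isFundamentalSeq (o := α) rfl).choose_spec
  set f := (Ordinal.exists_isFundamentalSeq (o := α) rfl).choose
  have hlim : IsSuccLimit α.cof.ord := isSuccLimit_ord hκ
  have lt_iff {β y : Ordinal} :
      y < cofinalMap α β ↔ ∃ γ : Iio α.cof.ord, γ.1 < β ∧ y ≤ f γ := by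
    simp only [cofinalMap, Ordinal.lt_iSup_iff, Order.lt_add_one_iff, Subtype.exists, exists_prop]
    rfl
  have le_f {β : Ordinal} (hβ : β < α.cof.ord) : cofinalMap α β ≤ f ⟨β, hβ⟩ :=
    Ordinal.iSup_le fun γ => Order.add_one_le_of_lt (hmono γ.2)
  have f_lt {β : Ordinal} (hβ : β < α.cof.ord) : (f ⟨β, hβ⟩ : Ordinal) < cofinalMap α (β + 1) :=
    lt_iff.2 ⟨_, Order.lt_add_one_iff.2 le_rfl, le_rfl⟩
  refine ⟨fun β hβ γ hγ hβγ => ?_, fun β hβ => (le_f hβ).trans_lt (f ⟨β, hβ⟩).2, ?_, ?_⟩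
  · exact (le_f hβ).trans_lt (lt_iff.2 ⟨⟨β, hβ⟩, hβγ, le_rfl⟩)
  · intro x hx
    obtain ⟨_, ⟨γ, rfl⟩, hxγ⟩ := hcof ⟨x, hx⟩
    exact ⟨γ + 1, hlim.add_one_lt γ.2, (show x ≤ f γ from hxγ).trans_lt (f_lt γ.2)⟩
  · intro β hβ hβlim y hy
    obtain ⟨γ, hγβ, hyγ⟩ := lt_iff.1 hy
    exact ⟨γ + 1, hβlim.add_one_lt hγβ, hyγ.trans_lt (f_lt γ.2)⟩

theorem exists_strictMono_nat_of_forall_exists {o x : Ordinal} (ho : ℵ₀ < o.cof) (hx : x < o)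
    {P : Ordinal → Ordinal → Prop} (h : ∀ β < o, ∃ β' < o, β < β' ∧ P β β') :
    ∃ b : ℕ → Ordinal, b 0 = x ∧ StrictMono b ∧ (∀ n, P (b n) (b (n + 1))) ∧ ⨆ n, b n < o := by
  choose! next hnext_lt hlt_next hP using h
  let b : ℕ → Ordinal := fun n => Nat.rec x (fun _ => next) n
  have hb : ∀ n, b n < o := fun n => by
    induction n with
    | zero => exact hx
    | succ n ih => exact hnext_lt _ ih
  refine ⟨b, rfl, strictMono_nat_of_lt_succ fun n => hlt_next _ (hb n), fun n => hP _ (hb n), ?_⟩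
  refine Ordinal.lift_iSup_lt_of_lt_cof ?_ hb
  simpa using ho

namespace IsContinuousCofinal

variable {e : Ordinal → Ordinal} {o α : Ordinal} {E : Set Ordinal}

theorem mem_of_isSuccLimit (he : IsContinuousCofinal e o α) (hE : IsClosedBelow E α)
    {β : Ordinal} (hβ : β < o) (hlim : IsSuccLimit β)
    (hbetween : ∀ γ < β, ∃ z ∈ E, e γ < z ∧ z < e β) : e β ∈ E := by
  obtain ⟨z, -, -, hzβ⟩ := hbetween 0 hlim.bot_lt
  refine hE _ (he.apply_lt β hβ) hzβ.ne_bot fun y hy => ?_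
  obtain ⟨γ, hγβ, hyγ⟩ := he.exists_lt_of_isSuccLimit β hβ hlim y hy
  obtain ⟨z, hzE, hγz, hzβ⟩ := hbetween γ hγβ
  exact ⟨z, hzE, hyγ.trans hγz, hzβ⟩

theorem exists_lt_mem_between (he : IsContinuousCofinal e o α) (hE : IsClubSet E α)
    (ho : IsSuccLimit o) {β : Ordinal} (hβ : β < o) :
    ∃ β' < o, β < β' ∧ ∃ z ∈ E, e β < z ∧ z < e β' := by
  have hβ1 : β + 1 < o := ho.add_one_lt hβ
  obtain ⟨z, hzE, hz⟩ := hE.2.1 _ (he.apply_lt _ hβ1)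
  obtain ⟨γ, hγ, hzγ⟩ := he.exists_lt z (hE.1 z hzE)
  have hmax : max γ (β + 1) < o := max_lt hγ hβ1
  refine ⟨_, hmax, (Order.lt_add_one_iff.2 le_rfl).trans_le (le_max_right _ _), z, hzE,
    (he.strictMonoOn hβ hβ1 (Order.lt_add_one_iff.2 le_rfl)).trans_le hz, hzγ.trans_le ?_⟩
  exact he.strictMonoOn.monotoneOn hγ hmax (le_max_left _ _)

theorem isClubSet_preimage (he : IsContinuousCofinal e o α) (hE : IsClubSet E α)
    (ho : ℵ₀ < o.cof) : IsClubSet {β | β < o ∧ e β ∈ E} o := by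
  have ho' : IsSuccLimit o := Ordinal.one_lt_cof_iff.1 (one_lt_aleph0.trans ho)
  have he_lt {γ β : Ordinal} (hγβ : γ < β) (hβ : β < o) : e γ < e β :=
    he.strictMonoOn (hγβ.trans hβ) hβ hγβ
  refine ⟨fun β hβ => hβ.1, fun x hx => ?_, fun β hβ hβ0 hlim => ⟨hβ, ?_⟩⟩
  · -- Interleave values of `e` with points of `E`; continuity puts `e` of the supremum into `E`.
    obtain ⟨b, hb0, hbmono, hbE, hbo⟩ :=
      exists_strictMono_nat_of_forall_exists ho hx fun β hβ => he.exists_lt_mem_between hE ho' hβ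
    set s := ⨆ n, b n
    have hb_lt (n : ℕ) : b n < s := (hbmono n.lt_succ_self).trans_le (Ordinal.le_iSup b _)
    have hlt_b {γ : Ordinal} (hγ : γ < s) : ∃ n, γ < b n := Ordinal.lt_iSup_iff.1 hγ
    refine ⟨s, ⟨hbo, he.mem_of_isSuccLimit hE.isClosedBelow hbo ?_ fun γ hγ => ?_⟩,
      hb0 ▸ (hb_lt 0).le⟩
    · refine isSuccLimit_of_forall_exists_between (D := range b) (hb_lt 0).ne_bot fun γ hγ => ?_
      obtain ⟨n, hn⟩ := hlt_b hγ
      exact ⟨b n, mem_range_self n, hn, hb_lt n⟩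
    · obtain ⟨n, hn⟩ := hlt_b hγ
      obtain ⟨z, hzE, hnz, hzn⟩ := hbE n
      exact ⟨z, hzE, (he_lt hn ((hb_lt n).trans hbo)).trans hnz,
        hzn.trans (he_lt (hb_lt (n + 1)) hbo)⟩
  · refine he.mem_of_isSuccLimit hE.isClosedBelow hβ
      (isSuccLimit_of_forall_exists_between hβ0 hlim) fun γ hγ => ?_
    obtain ⟨γ', ⟨-, hγ'E⟩, hγγ', hγ'β⟩ := hlim γ hγ
    exact ⟨e γ', hγ'E, he_lt hγγ' (hγ'β.trans hβ), he_lt hγ'β hβ⟩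

theorem isClubSet_closureBelow_image (he : IsContinuousCofinal e o α) {C : Set Ordinal}
    (hC : IsClubSet C o) : IsClubSet (closureBelow α (e '' C)) α := by
  refine isClubSet_closureBelow (forall_mem_image.2 fun β hβ => he.apply_lt β (hC.1 β hβ))
    fun x hx => ?_
  obtain ⟨β, hβ, hxβ⟩ := he.exists_lt x hx
  obtain ⟨γ, hγC, hβγ⟩ := hC.2.1 β hβ
  exact ⟨e γ, mem_image_of_mem e hγC,
    hxβ.le.trans (he.strictMonoOn.monotoneOn hβ (hC.1 γ hγC) hβγ)⟩

end IsContinuousCofinal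

end ContinuousCofinal

/-- If the club filter on ω₁ has density ℵ₂, then CG(S²₁)⁻ holds. -/
theorem stmt8 (C : Ordinal → Set Ordinal)
    (hC : ∀ ξ, ξ < (aleph 2).ord → IsClubSet (C ξ) (aleph 1).ord)
    (hdense : ∀ D, IsClubSet D (aleph 1).ord → ∃ ξ < (aleph 2).ord, C ξ ⊆ D) :
    ∃ 𝒞 : Ordinal → Set (Set Ordinal),
      (∀ α, S21 α → #(↥(𝒞 α)) ≤ aleph 2 ∧ ∀ D ∈ 𝒞 α, IsClubSet D α) ∧
      (∀ E, IsClubSet E (aleph 2).ord → ∃ α, S21 α ∧ ∃ D ∈ 𝒞 α, D ⊆ E) := by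
  have hω₁ : ℵ₀ < (aleph 1).ord.cof := by
    rw [isRegular_aleph_one.cof_ord]
    exact aleph0_lt_aleph_one
  have hω₂ : (aleph 2).IsRegular := by
    simpa [one_add_one_eq_two] using isRegular_aleph_add_one 1
  refine ⟨fun α => (fun ξ => closureBelow α (cofinalMap α '' liftSet (C ξ))) '' Iio (aleph 2).ord,
    fun α hα => ⟨?_, ?_⟩, fun E hE => ?_⟩
  · simpa using Cardinal.mk_image_le_lift
      (f := fun ξ => closureBelow α (cofinalMap α '' liftSet (C ξ))) (s := Iio (aleph 2).ord)
  · rintro D ⟨ξ, hξ, rfl⟩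
    exact (isContinuousCofinal_cofinalMap (aleph0_le_aleph 1) hα.2).isClubSet_closureBelow_image
      ((hC ξ hξ).liftSet (by simp))
  · obtain ⟨α, hα, hcof, hEα⟩ := hE.exists_isClubSet_inter_Iio hω₂
      (isSuccLimit_ord (aleph0_le_aleph 1)) (ord_lt_ord.2 (aleph_lt_aleph.2 one_lt_two))
    rw [isRegular_aleph_one.cof_ord] at hcof
    have he := isContinuousCofinal_cofinalMap (aleph0_le_aleph 1) hcof
    obtain ⟨ξ, hξ, hCB⟩ := hdense _ ((he.isClubSet_preimage hEα hω₁).liftSet (by simp))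
    refine ⟨α, ⟨hα, hcof⟩, _, ⟨ξ, hξ, rfl⟩, hE.isClosedBelow.closureBelow_subset hα.le ?_⟩
    rintro _ ⟨β, hβ, rfl⟩
    exact (liftSet_liftSet_subset _ (preimage_mono (image_mono hCB) hβ)).2.1
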